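/- arXiv:math/0304332 — 2 statements merged into one kernel-verified Lean document; each statement's English description precedes it below -/
import Mathlib

section
/- There do not exist harmonic functions v₀, v₁ on the open unit disc {z ∈ ℂ : |z| < 1}, neither of which is identically zero, such that v₀⁺ = v₁⁺ pointwise, max(v₀(z), v₁(z)) ≥ 0 for all z in the disc, and v₀(0) = v₁(0) = 0. -/
/-- The Laplacian `∂²u/∂x² + ∂²u/∂y²` of a function `u : ℂ → ℝ`,
under the identification `ℂ ≅ ℝ²`. -/
noncomputable def laplacian (u : ℂ → ℝ) (z : ℂ) : ℝ :=
  fderiv ℝ (fun w => fderiv ℝ u w 1) z 1 +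
    fderiv ℝ (fun w => fderiv ℝ u w Complex.I) z Complex.I

/-- `u` is harmonic on the open set `U ⊆ ℂ`: it is twice continuously
differentiable on `U` and its Laplacian vanishes identically on `U`. -/
def IsHarmonicOn (u : ℂ → ℝ) (U : Set ℂ) : Prop :=
  ContDiffOn ℝ 2 u U ∧ ∀ z ∈ U, laplacian u z = 0

/-!
If `v₀ > 0` somewhere, then `v₀⁺ = v₁⁺` makes `v₀ = v₁` on the open set `{v₀ > 0}`, hence on
the whole disc since harmonic functions are real analytic. Then `v₀ = max v₀ v₁ ≥ 0 = v₀ 0`,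
and the strong minimum principle gives `v₀ ≡ 0`. Otherwise `v₀ ≤ 0 = v₀ 0`, and the strong
maximum principle gives `v₀ ≡ 0`. On a disc, the maximum principle follows from the maximum
modulus principle applied to `exp ∘ F`, where `F` is holomorphic with real part `f`.
-/

open Complex Metric Set Filter Topology InnerProductSpace
open scoped Laplacian

theorem laplacian_eq_laplacian {u : ℂ → ℝ} {z : ℂ}
    (hu : DifferentiableAt ℝ (fderiv ℝ u) z) : laplacian u z = Δ u z := by
  simp [laplacian, laplacian_eq_iteratedFDeriv_complexPlane, iteratedFDeriv_two_apply,
    fderiv_clm_apply hu (differentiableAt_const _)]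

theorem IsHarmonicOn.harmonicOnNhd {u : ℂ → ℝ} {U : Set ℂ} (hU : IsOpen U)
    (hu : IsHarmonicOn u U) : HarmonicOnNhd u U := by
  have hC2 : ∀ z ∈ U, ContDiffAt ℝ 2 u z := fun z hz => hu.1.contDiffAt (hU.mem_nhds hz)
  refine fun z hz => ⟨hC2 z hz, ?_⟩
  filter_upwards [hU.mem_nhds hz] with w hw
  have hdiff : DifferentiableAt ℝ (fderiv ℝ u) w :=
    ((hC2 w hw).fderiv_right le_rfl).differentiableAt one_ne_zero
  rw [Pi.zero_apply, ← laplacian_eq_laplacian hdiff]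
  exact hu.2 w hw

namespace InnerProductSpace.HarmonicOnNhd

variable {f g : ℂ → ℝ}

theorem eqOn_ball_of_isMaxOn {c : ℂ} {r : ℝ} (hf : HarmonicOnNhd f (ball c r))
    (hmax : IsMaxOn f (ball c r) c) : EqOn f (fun _ => f c) (ball c r) := by
  intro z hz
  have hc : c ∈ ball c r := mem_ball_self (pos_of_mem_ball hz)
  obtain ⟨F, hF, hFre⟩ := hf.exists_analyticOnNhd_ball_re_eq
  have hnorm : ∀ w ∈ ball c r, ‖exp (F w)‖ = Real.exp (f w) := fun w hw => by
    rw [norm_exp, ← hFre hw]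
  have hmax' : IsMaxOn (norm ∘ (exp ∘ F)) (ball c r) c := fun w hw => by
    simpa [hnorm w hw, hnorm c hc] using hmax hw
  have hnorm_eq := Complex.norm_eqOn_of_isPreconnected_of_isMaxOn
    (convex_ball c r).isPreconnected isOpen_ball hF.differentiableOn.cexp hc hmax' hz
  simpa [hnorm z hz, hnorm c hc] using hnorm_eq

theorem eqOn_ball_of_isMinOn {c : ℂ} {r : ℝ} (hf : HarmonicOnNhd f (ball c r))
    (hmin : IsMinOn f (ball c r) c) : EqOn f (fun _ => f c) (ball c r) := fun _ hz =>
  neg_injective (hf.neg.eqOn_ball_of_isMaxOn hmin.neg hz)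

theorem eqOn_of_isPreconnected_of_eventuallyEq {U : Set ℂ} (hf : HarmonicOnNhd f U)
    (hg : HarmonicOnNhd g U) (hU : IsPreconnected U) {z₀ : ℂ} (hz₀ : z₀ ∈ U)
    (hfg : f =ᶠ[𝓝 z₀] g) : EqOn f g U :=
  AnalyticOnNhd.eqOn_of_preconnected_of_eventuallyEq (fun z hz => HarmonicAt.analyticAt (hf z hz))
    (fun z hz => HarmonicAt.analyticAt (hg z hz)) hU hz₀ hfg

end InnerProductSpace.HarmonicOnNhd

/-- There are no harmonic functions `v₀, v₁` on the unit disc, neither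
identically zero, with `v₀⁺ = v₁⁺` pointwise, `max(v₀, v₁) ≥ 0`, and
`v₀(0) = v₁(0) = 0`. -/
theorem no_harmonic_pair_on_disc :
    ¬ ∃ v₀ v₁ : ℂ → ℝ,
      IsHarmonicOn v₀ (Metric.ball (0 : ℂ) 1) ∧
      IsHarmonicOn v₁ (Metric.ball (0 : ℂ) 1) ∧
      (¬ ∀ z ∈ Metric.ball (0 : ℂ) 1, v₀ z = 0) ∧
      (¬ ∀ z ∈ Metric.ball (0 : ℂ) 1, v₁ z = 0) ∧
      (∀ z ∈ Metric.ball (0 : ℂ) 1, max (v₀ z) 0 = max (v₁ z) 0) ∧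
      (∀ z ∈ Metric.ball (0 : ℂ) 1, 0 ≤ max (v₀ z) (v₁ z)) ∧
      v₀ 0 = 0 ∧ v₁ 0 = 0 := by
  rintro ⟨v₀, v₁, h₀, h₁, hv₀, -, hplus, hmax, hv₀0, -⟩
  have H₀ := h₀.harmonicOnNhd isOpen_ball
  by_cases hpos : ∃ a ∈ ball (0 : ℂ) 1, 0 < v₀ a
  · obtain ⟨a, ha, hva⟩ := hpos
    have hloc : v₀ =ᶠ[𝓝 a] v₁ := by
      filter_upwards [isOpen_ball.mem_nhds ha,
        (H₀ a ha).1.continuousAt.preimage_mem_nhds (Ioi_mem_nhds hva)] with z hz (hvz : 0 < v₀ z)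
      have hplus_z := hplus z hz
      grind
    have heq := H₀.eqOn_of_isPreconnected_of_eventuallyEq (h₁.harmonicOnNhd isOpen_ball)
      (convex_ball 0 1).isPreconnected ha hloc
    have hmin : IsMinOn v₀ (ball 0 1) 0 := fun z hz => by
      simpa [hv₀0, ← heq hz] using hmax z hz
    exact hva.ne' ((H₀.eqOn_ball_of_isMinOn hmin ha).trans hv₀0)
  · push Not at hpos
    have hmax₀ : IsMaxOn v₀ (ball 0 1) 0 := fun z hz => by
      simpa [hv₀0] using hpos z hz
    exact hv₀ fun z hz => (H₀.eqOn_ball_of_isMaxOn hmax₀ hz).trans hv₀0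
end

section
/- Let G₁, G₂, G₃ be three pairwise disjoint nonempty connected open subsets of ℂ. Then the set of points of ℂ that are accessible from all three of G₁, G₂, G₃ contains at most two points. -/
/-- A point `p` is accessible from an open set `G ⊆ ℂ` if `p ∉ G` and there is
a continuous curve `γ : [0,1] → ℂ` with `γ(t) ∈ G` for `t ∈ [0,1)` and
`γ(1) = p`. -/
def Accessible (G : Set ℂ) (p : ℂ) : Prop :=
  p ∉ G ∧ ∃ γ : ℝ → ℂ, ContinuousOn γ (Set.Icc 0 1) ∧
    (∀ t ∈ Set.Ico (0:ℝ) 1, γ t ∈ G) ∧ γ 1 = p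

/-!
Suppose `p₀, p₁, p₂` are accessible from each of `G₀, G₁, G₂`. Joining a point `gᵢ ∈ Gᵢ` to
every `pⱼ` inside `Gᵢ` gives nine legs forming a drawing of `K₃,₃` in which two legs meet only if
they share an end. Let `θᵢⱼ(v)` be the change of `arg (· - v)` along the leg from `gᵢ` to `pⱼ`.
For two disjoint legs `E, F`, the function `F t - E s` has a continuous logarithm on the square,
so its argument changes by `0` around the boundary: the angles `F` subtends at the ends of `E` and
those `E` subtends at the ends of `F` satisfy a reciprocity law. Half the sum of these 18 laws,
with suitable signs, says that `∑ᵢⱼ (θᵢⱼ(pⱼ₊₁) - θᵢⱼ(pⱼ₋₁)) = 0`, whereas modulo `2π` this sum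
is an odd multiple of `π`, because reversing the chord from `pⱼ` to `pⱼ₊₁` changes its argument
by `π`.
-/

open Complex Set Function Finset unitInterval
open scoped Real

section ContinuousLog

variable {A : Type*} [TopologicalSpace A]

theorem exists_continuous_log_of_path {f : I → ℂ} (hf : Continuous f) (hf₀ : ∀ t, f t ≠ 0) :
    ∃ Λ : I → ℂ, Continuous Λ ∧ ∀ t, exp (Λ t) = f t := by
  obtain ⟨Λ, hΛ, -⟩ := isCoveringMap_exp.exists_path_lifts
    ⟨fun t ↦ (⟨f t, hf₀ t⟩ : {z : ℂ // z ≠ 0}), hf.subtype_mk _⟩ (log (f 0))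
    (Subtype.ext (exp_log (hf₀ 0)).symm)
  exact ⟨Λ, Λ.continuous, fun t ↦ congrArg Subtype.val (congrFun hΛ t)⟩

theorem exists_continuous_log_of_homotopy {f : I × A → ℂ} (hf : Continuous f)
    (hf₀ : ∀ x, f x ≠ 0) {Λ₀ : A → ℂ} (hΛ₀ : Continuous Λ₀) (hexp : ∀ a, exp (Λ₀ a) = f (0, a)) :
    ∃ Λ : I × A → ℂ, Continuous Λ ∧ ∀ x, exp (Λ x) = f x := by
  let H : C(I × A, {z : ℂ // z ≠ 0}) := ⟨fun x ↦ ⟨f x, hf₀ x⟩, hf.subtype_mk _⟩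
  have H₀ : ∀ a, H (0, a) = ⟨exp (Λ₀ a), exp_ne_zero _⟩ := fun a ↦ Subtype.ext (hexp a).symm
  exact ⟨_, ContinuousMap.continuous _, fun x ↦ congrArg Subtype.val
    (congrFun (isCoveringMap_exp.liftHomotopy_lifts H ⟨Λ₀, hΛ₀⟩ H₀) x)⟩

theorem exists_continuous_log_of_square {f : I × I → ℂ} (hf : Continuous f) (hf₀ : ∀ x, f x ≠ 0) :
    ∃ Λ : I × I → ℂ, Continuous Λ ∧ ∀ x, exp (Λ x) = f x := by
  obtain ⟨Λ₀, hΛ₀, hexp⟩ := exists_continuous_log_of_path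
    (hf.comp (continuous_const.prodMk continuous_id)) fun t ↦ hf₀ (0, t)
  exact exists_continuous_log_of_homotopy hf hf₀ hΛ₀ hexp

theorem continuous_log_sub_eq [PreconnectedSpace A] {Λ₁ Λ₂ : A → ℂ} (h₁ : Continuous Λ₁)
    (h₂ : Continuous Λ₂) (h : ∀ a, exp (Λ₁ a) = exp (Λ₂ a)) (a b : A) :
    Λ₁ a - Λ₁ b = Λ₂ a - Λ₂ b := by
  have : Λ₁ = fun x ↦ Λ₂ x + (Λ₁ b - Λ₂ b) :=
    isCoveringMap_exp.eq_of_comp_eq h₁ (h₂.add continuous_const)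
      (funext fun x ↦ Subtype.ext <| by simp [exp_add, exp_sub, h]) b (by ring)
  rw [this]
  ring

end ContinuousLog

open scoped Classical in
/-- `0` when `f` has no continuous logarithm, e.g. when `f` vanishes somewhere. -/
noncomputable def argChange (f : I → ℂ) : ℝ :=
  if h : ∃ Λ : I → ℂ, Continuous Λ ∧ ∀ t, exp (Λ t) = f t then (h.choose 1 - h.choose 0).im
  else 0

theorem argChange_eq {f Λ : I → ℂ} (hΛ : Continuous Λ) (hexp : ∀ t, exp (Λ t) = f t) :
    argChange f = (Λ 1 - Λ 0).im := by
  have h : ∃ Λ : I → ℂ, Continuous Λ ∧ ∀ t, exp (Λ t) = f t := ⟨Λ, hΛ, hexp⟩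
  rw [argChange, dif_pos h, continuous_log_sub_eq h.choose_spec.1 hΛ
    (fun t ↦ by rw [h.choose_spec.2, hexp])]

theorem coe_argChange {f : I → ℂ} (hf : Continuous f) (hf₀ : ∀ t, f t ≠ 0) :
    (argChange f : Real.Angle) = arg (f 1) - arg (f 0) := by
  obtain ⟨Λ, hΛ, hexp⟩ := exists_continuous_log_of_path hf hf₀
  rw [argChange_eq hΛ hexp, ← hexp, ← hexp, arg_exp, arg_exp, Real.Angle.coe_toIocMod,
    Real.Angle.coe_toIocMod, sub_im, Real.Angle.coe_sub]

theorem argChange_reciprocity {E F : I → ℂ} (hE : Continuous E) (hF : Continuous F)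
    (hEF : ∀ s t, F t ≠ E s) :
    argChange (fun t ↦ F t - E 1) - argChange (fun t ↦ F t - E 0) =
      argChange (fun s ↦ E s - F 1) - argChange (fun s ↦ E s - F 0) := by
  obtain ⟨Λ, hΛ, hexp⟩ := exists_continuous_log_of_square (f := fun x ↦ F x.2 - E x.1)
    (by fun_prop) fun x ↦ sub_ne_zero.mpr (hEF x.1 x.2)
  have hrow : ∀ s, argChange (fun t ↦ F t - E s) = (Λ (s, 1) - Λ (s, 0)).im := fun s ↦
    argChange_eq (hΛ.comp (continuous_const.prodMk continuous_id)) fun t ↦ hexp (s, t)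
  have hcol : ∀ t, argChange (fun s ↦ E s - F t) = (Λ (1, t) - Λ (0, t)).im := fun t ↦ by
    rw [argChange_eq (f := fun s ↦ E s - F t) (Λ := fun s ↦ Λ (s, t) + Real.pi * Complex.I)
      ((hΛ.comp (continuous_id.prodMk continuous_const)).add continuous_const)
      fun s ↦ by rw [exp_add, hexp, exp_pi_mul_I]; ring]
    ring_nf
  simp only [hrow, hcol, sub_im]
  ring

theorem Accessible.exists_path {G : Set ℂ} {x : ℂ} (hx : Accessible G x) (hG : IsOpen G)
    (hGc : IsConnected G) {g : ℂ} (hg : g ∈ G) : ∃ γ : Path g x, ∀ t ≠ 1, γ t ∈ G := by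
  obtain ⟨-, γ, hγc, hγG, rfl⟩ := hx
  have hγ₀ : γ 0 ∈ G := hγG 0 ⟨le_rfl, zero_lt_one⟩
  let tail : Path (γ 0) (γ 1) :=
    ⟨⟨fun t ↦ γ t, hγc.comp_continuous continuous_subtype_val Subtype.prop⟩, rfl, rfl⟩
  have head := ((hG.isConnected_iff_isPathConnected.mp hGc).joinedIn g hg _ hγ₀)
  refine ⟨head.somePath.trans tail, fun t ht ↦ ?_⟩
  rw [Path.trans_apply]
  split_ifs with h
  · exact head.somePath_mem _
  · have ht₁ : (t : ℝ) < 1 := lt_of_le_of_ne t.2.2 (Subtype.coe_ne_coe.mpr ht)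
    exact hγG _ ⟨by change 0 ≤ 2 * (t : ℝ) - 1; linarith,
      by change 2 * (t : ℝ) - 1 < 1; linarith⟩

section Legs

variable {X : Type*} [TopologicalSpace X]

theorem Path.apply_ne_of_forall_ne_one_mem {G : Set X} {g x v : X} {γ : Path g x}
    (hγ : ∀ t ≠ 1, γ t ∈ G) (hvG : v ∉ G) (hvx : v ≠ x) (t : I) : γ t ≠ v := by
  rintro rfl
  by_cases ht : t = 1
  · exact hvx (by rw [ht, γ.target])
  · exact hvG (hγ t ht)

theorem Path.apply_ne_apply_of_disjoint {G G' : Set X} {g g' x y : X} {γ : Path g x}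
    {δ : Path g' y} (hγ : ∀ t ≠ 1, γ t ∈ G) (hδ : ∀ t ≠ 1, δ t ∈ G') (hGG' : Disjoint G G')
    (hxG' : x ∉ G') (hyG : y ∉ G) (hxy : x ≠ y) (s t : I) : δ t ≠ γ s := by
  by_cases hs : s = 1
  · rw [hs, γ.target]
    exact Path.apply_ne_of_forall_ne_one_mem hδ hxG' hxy t
  · exact Path.apply_ne_of_forall_ne_one_mem hδ (hGG'.notMem_of_mem_left (hγ s hs))
      (fun h ↦ hyG (h ▸ hγ s hs)) t

end Legs

theorem sum_sum_comp_equiv {M : Type*} [AddCommMonoid M] {ι κ : Type*} [Fintype ι] [Fintype κ]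
    (e₁ : ι ≃ ι) (e₂ : κ ≃ κ) (f : ι → κ → M) :
    ∑ i, ∑ j, f (e₁ i) (e₂ j) = ∑ i, ∑ j, f i j := by
  rw [← Equiv.sum_comp e₁ (fun i ↦ ∑ j, f i j)]
  exact sum_congr rfl fun i _ ↦ Equiv.sum_comp e₂ (f (e₁ i))

/-- With `θ i j v` read as the angle that the leg from the `i`-th hub to `z j` subtends at `v`,
this adds up, over all legs, the angle at the next point minus the angle at the previous one. -/
def twist {X : Type*} (z : Fin 3 → X) (θ : Fin 3 → Fin 3 → X → ℝ) : ℝ :=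
  ∑ i, ∑ j, (θ i j (z (j + 1)) - θ i j (z (j - 1)))

theorem twist_eq_zero {X : Type*} (z g : Fin 3 → X) (θ : Fin 3 → Fin 3 → X → ℝ)
    (hcell : ∀ i j i' j', i ≠ i' → j ≠ j' →
      θ i' j' (z j) - θ i' j' (g i) = θ i j (z j') - θ i j (g i')) :
    twist z θ = 0 := by
  -- `D i j i' j'`: change of the angle subtended by leg `(i', j')` along leg `(i, j)`
  set D : Fin 3 → Fin 3 → Fin 3 → Fin 3 → ℝ := fun i j i' j' ↦ θ i' j' (z j) - θ i' j' (g i)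
  have hD : ∀ i j i' j', i ≠ i' → j ≠ j' → D i j i' j' = D i' j' i j := hcell
  have succ_ne : ∀ i : Fin 3, i + 1 ≠ i := by decide
  have pred_ne : ∀ i : Fin 3, i - 1 ≠ i := by decide
  have hpp : ∑ i, ∑ j, D (i + 1) (j + 1) i j = ∑ i, ∑ j, D (i - 1) (j - 1) i j := by
    rw [← sum_sum_comp_equiv (Equiv.addRight 1) (Equiv.addRight 1)
      (fun i j ↦ D (i - 1) (j - 1) i j)]
    simp only [Equiv.coe_addRight, add_sub_cancel_right]
    exact sum_congr rfl fun i _ ↦ sum_congr rfl fun j _ ↦ hD _ _ _ _ (succ_ne i) (succ_ne j)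
  have hpm : ∑ i, ∑ j, D (i - 1) (j + 1) i j = ∑ i, ∑ j, D (i + 1) (j - 1) i j := by
    rw [← sum_sum_comp_equiv (Equiv.subRight 1) (Equiv.addRight 1)
      (fun i j ↦ D (i + 1) (j - 1) i j)]
    simp only [Equiv.coe_addRight, Equiv.subRight_apply, add_sub_cancel_right, sub_add_cancel]
    exact sum_congr rfl fun i _ ↦ sum_congr rfl fun j _ ↦ hD _ _ _ _ (pred_ne i) (succ_ne j)
  have htwice : ∀ i j, 2 * (θ i j (z (j + 1)) - θ i j (z (j - 1))) =
      D (i + 1) (j + 1) i j + D (i - 1) (j + 1) i j - D (i + 1) (j - 1) i j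
        - D (i - 1) (j - 1) i j := fun i j ↦ by simp only [D]; ring
  have h2 : 2 * twist z θ = 0 := by
    rw [twist, mul_sum]
    simp only [mul_sum, htwice]
    simp only [sum_sub_distrib, sum_add_distrib, hpp, hpm]
    ring
  linarith

theorem coe_twist_eq_pi (z g : Fin 3 → ℂ) (hz : Injective z) (θ : Fin 3 → Fin 3 → ℂ → ℝ)
    (hpolar : ∀ i j j', j ≠ j' →
      (θ i j (z j') : Real.Angle) = arg (z j - z j') - arg (g i - z j')) :
    (twist z θ : Real.Angle) = π := by
  have succ_ne : ∀ j : Fin 3, j ≠ j + 1 := by decide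
  have pred_ne : ∀ j : Fin 3, j ≠ j - 1 := by decide
  have hreverse : ∀ j, (arg (z (j + 1) - z j) : Real.Angle) = arg (z j - z (j + 1)) + π :=
    fun j ↦ by rw [← neg_sub, arg_neg_coe_angle (sub_ne_zero.mpr (hz.ne (succ_ne j)))]
  have hrow : ∀ i, ∑ j, ((θ i j (z (j + 1)) : Real.Angle) - θ i j (z (j - 1))) =
      -(3 • (π : Real.Angle)) := by
    intro i
    have hg₁ := Equiv.sum_comp (Equiv.addRight 1) fun j ↦ (arg (g i - z j) : Real.Angle)
    have hg₂ := Equiv.sum_comp (Equiv.subRight 1) fun j ↦ (arg (g i - z j) : Real.Angle)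
    have hz₁ := Equiv.sum_comp (Equiv.addRight 1) fun j ↦ (arg (z j - z (j - 1)) : Real.Angle)
    simp only [Equiv.coe_addRight, Equiv.subRight_apply, add_sub_cancel_right, hreverse]
      at hg₁ hg₂ hz₁
    simp only [hpolar _ _ _ (succ_ne _), hpolar _ _ _ (pred_ne _), sum_sub_distrib, ← hz₁, hg₁,
      hg₂, sum_add_distrib, sum_const, card_univ, Fintype.card_fin]
    abel
  have hcoe : ∀ f : Fin 3 → ℝ, ((∑ j, f j : ℝ) : Real.Angle) = ∑ j, (f j : Real.Angle) :=
    fun f ↦ map_sum Real.Angle.coeHom f univ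
  simp only [twist, hcoe, Real.Angle.coe_sub, hrow, sum_neg_distrib, sum_const, card_univ,
    Fintype.card_fin]
  rw [smul_smul, show (3 * 3 : ℕ) = 4 * 2 + 1 from rfl, succ_nsmul, mul_nsmul',
    Real.Angle.two_nsmul_coe_pi, nsmul_zero, zero_add, Real.Angle.neg_coe_pi]

theorem not_injective_of_forall_accessible (G : Fin 3 → Set ℂ) (hG : ∀ i, IsOpen (G i))
    (hGc : ∀ i, IsConnected (G i)) (hGd : Pairwise (Disjoint on G)) (z : Fin 3 → ℂ)
    (hz : ∀ i j, Accessible (G i) (z j)) : ¬ Injective z := by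
  intro hinj
  choose g hg using fun i ↦ (hGc i).nonempty
  choose γ hγ using fun i j ↦ (hz i j).exists_path (hG i) (hGc i) (hg i)
  let θ i j v := argChange fun t ↦ γ i j t - v
  have hcell : ∀ i j i' j', i ≠ i' → j ≠ j' →
      θ i' j' (z j) - θ i' j' (g i) = θ i j (z j') - θ i j (g i') := fun i j i' j' hi hj ↦ by
    simpa only [Path.source, Path.target] using
      argChange_reciprocity (γ i j).continuous (γ i' j').continuous
        (Path.apply_ne_apply_of_disjoint (hγ i j) (hγ i' j') (hGd hi) (hz i' j).1 (hz i j').1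
          (hinj.ne hj))
  have hpolar : ∀ i j j', j ≠ j' →
      (θ i j (z j') : Real.Angle) = arg (z j - z j') - arg (g i - z j') := fun i j j' hj ↦ by
    simpa only [Path.source, Path.target] using
      coe_argChange (f := fun t ↦ γ i j t - z j') ((γ i j).continuous.sub continuous_const)
        fun t ↦ sub_ne_zero.mpr
          (Path.apply_ne_of_forall_ne_one_mem (hγ i j) (hz i j').1 (hinj.ne hj).symm t)
  apply Real.Angle.pi_ne_zero
  rw [← coe_twist_eq_pi z g hinj θ hpolar, twist_eq_zero z g θ hcell, Real.Angle.coe_zero]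

/-- At most two points of the plane are accessible from each of three pairwise
disjoint nonempty connected open sets. -/
theorem accessible_from_three_domains_le_two
    (G₁ G₂ G₃ : Set ℂ)
    (h₁ : IsOpen G₁) (h₂ : IsOpen G₂) (h₃ : IsOpen G₃)
    (hc₁ : IsConnected G₁) (hc₂ : IsConnected G₂) (hc₃ : IsConnected G₃)
    (h₁₂ : Disjoint G₁ G₂) (h₁₃ : Disjoint G₁ G₃) (h₂₃ : Disjoint G₂ G₃) :
    {p : ℂ | Accessible G₁ p ∧ Accessible G₂ p ∧ Accessible G₃ p}.encard ≤ 2 := by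
  by_contra! hlt
  obtain ⟨t, hts, ht⟩ := exists_subset_encard_eq (Order.add_one_le_of_lt hlt)
  obtain ⟨p, q, r, hpq, hpr, hqr, rfl⟩ := encard_eq_three.mp ht
  have hp := hts (by simp : p ∈ {p, q, r})
  have hq := hts (by simp : q ∈ {p, q, r})
  have hr := hts (by simp : r ∈ {p, q, r})
  refine not_injective_of_forall_accessible ![G₁, G₂, G₃] ?_ ?_ ?_ ![p, q, r] ?_ ?_
  · intro i; fin_cases i <;> assumption
  · intro i; fin_cases i <;> assumption
  · intro i j hij
    fin_cases i <;> fin_cases j <;>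
      simp_all [onFun, h₁₂.symm, h₁₃.symm, h₂₃.symm]
  · intro i j
    fin_cases i <;> fin_cases j <;> simp_all
  · intro i j hij
    fin_cases i <;> fin_cases j <;> simp_all [eq_comm]
end
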